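/- Let F1, F2 : ℂ → ℂ be functions such that F1² and F2² are linearly independent over ℂ and there exists n with F1(n)·F2(n) ≠ 0. Let λ1, λ2, λ3 : ℤ → ℂˣ, μ1, μ2, μ3 : ℤ → ℂˣ, x, y : ℤ × ℤ → ℂˣ, and set ρ(l,m) = λ3(l)^((−1)^m), σ(l,m) = μ3(m)^((−1)^l). Define L(l,m,n) = [[F1(n)/ρ, F2(n)·λ1·x̄·y], [F2(n)·λ2/(x·ȳ), F1(n)·ρ]] and M(l,m,n) = [[F2(n)·x̂/(σ·x), F1(n)·μ2], [F1(n)·μ1, F2(n)·σ·y/ŷ]]. Then the compatibility condition L(l,m+1,n)·M(l,m,n) = M(l+1,m,n)·L(l,m,n) holds for all (l,m,n) if and only if (x,y) satisfies the LSG₂ system for all (l,m): (LSG2-a) (ρ/σ)·(x̂/x) + λ1·μ1·x̂̄·ŷ = (σ/ρ)·(x̂̄/x̄) + λ2·μ2/(x·ȳ) and (LSG2-b) (σ/ρ)·(ŷ̄/ŷ) + λ2·μ2/(x̂·y) = (ρ/σ)·(ȳ/y) + λ1·μ1·x̄·ŷ̄. -/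

import Mathlib

/-- `ρ(l,m) = λ3(l)^((−1)^m)`. -/
noncomputable def rho (lam3 : ℤ → ℂˣ) (l m : ℤ) : ℂˣ :=
  lam3 l ^ ((((-1 : ℤˣ) ^ m) : ℤˣ) : ℤ)

/-- `σ(l,m) = μ3(m)^((−1)^l)`. -/
noncomputable def sig (μ3 : ℤ → ℂˣ) (l m : ℤ) : ℂˣ :=
  μ3 m ^ ((((-1 : ℤˣ) ^ l) : ℤˣ) : ℤ)

set_option maxHeartbeats 1000000 in
lemma rho_succ (lam3 : ℤ → ℂˣ) (l m : ℤ) : rho lam3 l (m + 1) = (rho lam3 l m)⁻¹ := by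
  unfold rho; rw [zpow_add, zpow_one]; push_cast [Units.val_mul]; rw [mul_neg_one, zpow_neg]

lemma sig_succ (μ3 : ℤ → ℂˣ) (l m : ℤ) : sig μ3 (l + 1) m = (sig μ3 l m)⁻¹ := by
  unfold sig; rw [zpow_add, zpow_one]; push_cast [Units.val_mul]; rw [mul_neg_one, zpow_neg]

set_option maxHeartbeats 1000000 in
/-- the Lax pair (LSG2LP) is compatible iff `(x, y)` solves the
LSG₂ system. -/
theorem stmt7 (F1 F2 : ℂ → ℂ)
    (hind : ∀ c1 c2 : ℂ, (∀ n : ℂ, c1 * (F1 n) ^ 2 + c2 * (F2 n) ^ 2 = 0) → c1 = 0 ∧ c2 = 0)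
    (hne : ∃ n : ℂ, F1 n * F2 n ≠ 0)
    (lam1 lam2 lam3 : ℤ → ℂˣ) (μ1 μ2 μ3 : ℤ → ℂˣ) (x y : ℤ × ℤ → ℂˣ)
    (L M : ℤ × ℤ → ℂ → Matrix (Fin 2) (Fin 2) ℂ)
    (hL : ∀ (l m : ℤ) (n : ℂ), L (l, m) n =
      !![F1 n / (rho lam3 l m : ℂ), F2 n * (lam1 l * x (l + 1, m) * y (l, m));
         F2 n * ((lam2 l : ℂ) / (x (l, m) * y (l + 1, m))), F1 n * (rho lam3 l m : ℂ)])
    (hM : ∀ (l m : ℤ) (n : ℂ), M (l, m) n =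
      !![F2 n * ((x (l, m + 1) : ℂ) / (sig μ3 l m * x (l, m))), F1 n * (μ2 m : ℂ);
         F1 n * (μ1 m : ℂ), F2 n * ((sig μ3 l m : ℂ) * y (l, m) / y (l, m + 1))]) :
    (∀ (l m : ℤ) (n : ℂ), L (l, m + 1) n * M (l, m) n = M (l + 1, m) n * L (l, m) n) ↔
    (∀ l m : ℤ,
      (rho lam3 l m : ℂ) / (sig μ3 l m) * (x (l, m + 1) / x (l, m)) +
          (lam1 l : ℂ) * μ1 m * x (l + 1, m + 1) * y (l, m + 1) =
        (sig μ3 l m : ℂ) / (rho lam3 l m) * (x (l + 1, m + 1) / x (l + 1, m)) +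
          (lam2 l : ℂ) * μ2 m / (x (l, m) * y (l + 1, m)) ∧
      (sig μ3 l m : ℂ) / (rho lam3 l m) * (y (l + 1, m + 1) / y (l, m + 1)) +
          (lam2 l : ℂ) * μ2 m / (x (l, m + 1) * y (l, m)) =
        (rho lam3 l m : ℂ) / (sig μ3 l m) * (y (l + 1, m) / y (l, m)) +
          (lam1 l : ℂ) * μ1 m * x (l + 1, m) * y (l + 1, m + 1)) := by
  constructor
  · intro h l m
    obtain ⟨n, hn⟩ := hne
    have H := h l m n
    rw [hL, hM, hL, hM, rho_succ, sig_succ] at H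
    have H00 := congrFun (congrFun H 0) 0
    have H11 := congrFun (congrFun H 1) 1
    simp only [Matrix.mul_apply, Fin.sum_univ_two, Matrix.cons_val', Matrix.cons_val_zero,
      Matrix.cons_val_one, Matrix.head_cons, Matrix.empty_val', Matrix.cons_val_fin_one,
      Matrix.head_fin_const, Matrix.of_apply, Units.val_inv_eq_inv_val] at H00 H11
    simp only [div_eq_mul_inv, mul_inv, inv_inv] at H00 H11
    constructor
    · exact mul_left_cancel₀ hn (by linear_combination H00)
    · have h1 : (F1 n) ≠ 0 := fun h => hn (by rw [h]; ring)
      have h2 : (F2 n) ≠ 0 := fun h => hn (by rw [h]; ring)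
      field_simp at H11 ⊢
      have hk : (F1 n * F2 n * (y (l + 1, m + 1) : ℂ)) ≠ 0 :=
        mul_ne_zero hn (Units.ne_zero _)
      apply mul_left_cancel₀ hk
      linear_combination (F1 n * F2 n * (y (l + 1, m + 1) : ℂ)) * H11
  · intro h l m n
    obtain ⟨ha, hb⟩ := h l m
    rw [hL, hM, hL, hM, rho_succ, sig_succ]
    ext i j
    fin_cases i <;> fin_cases j <;>
      simp only [Matrix.mul_apply, Fin.sum_univ_two, Matrix.cons_val', Matrix.cons_val_zero,
        Matrix.cons_val_one, Matrix.head_cons, Matrix.empty_val', Matrix.cons_val_fin_one,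
        Matrix.head_fin_const, Matrix.of_apply, Units.val_inv_eq_inv_val, Fin.isValue,
        Fin.mk_zero, Fin.mk_one] <;>
      simp only [div_eq_mul_inv, mul_inv, inv_inv]
    · linear_combination (F1 n * F2 n) * ha
    · field_simp
      ring
    · field_simp
      ring
    · field_simp at hb
      field_simp
      apply mul_left_cancel₀ (show ((y (l, m) : ℂ)) ≠ 0 from Units.ne_zero _)
      linear_combination (F1 n * F2 n * (y (l, m) : ℂ)) * hb
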